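/- arXiv:2003.10357 — 2 statements merged into one kernel-verified Lean document; each statement's English description precedes it below -/
import Mathlib

section
/- Let K be an algebraically closed field, let N ≤ r, let A be an r×N integer matrix with rows u_1,…,u_r ∈ ℤ^N, and let G = {t ∈ (Kˣ)^r : t^A = 1_N}. Let σ : {1,…,N} → {1,…,r} be injective and let A_σ be the N×N matrix whose i-th row is u_{σ(i)}; assume det(A_σ) is nonzero and coprime to the characteristic of K. Then for every family (x_i)_{i ∉ Im(σ)} of units of K there exists t ∈ G such that t_i = x_i⁻¹ for every index i ∈ {1,…,r} outside the image of σ. (Paper: Lemma 3.4 'RepOrbit', in matrix form.) -/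
/-!
Write `t ^ A` for the tuple `j ↦ ∏ i, t i ^ A i j`, so that `(t ^ A) ^ B = t ^ (A * B)`.
For a square integer matrix `B`, the identity `adj B * B = det B • 1` shows that
`s ↦ s ^ B` is surjective as soon as every element has a `det B`-th root: given `c`, take
`w` with `w ^ det B = c` and `s = w ^ adj B`. In `Kˣ` with `K` algebraically closed such
roots exist. To find `t` with `t ^ A = 1` and prescribed coordinates `y` outside the image
of `σ`, put `t = s` on the image of `σ` and `t = y` elsewhere; then `t ^ A = s ^ A_σ * c`
with `c` independent of `s`, and we solve `s ^ A_σ = c⁻¹`.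
-/

open Function

section MatrixZPow

variable {G : Type*} [CommGroup G] {m n p : Type*} [Fintype m]

theorem zpow_sum {ι : Type*} (a : G) (s : Finset ι) (f : ι → ℤ) :
    a ^ (∑ i ∈ s, f i) = ∏ i ∈ s, a ^ f i := by
  induction s using Finset.cons_induction with
  | empty => simp
  | cons i s hi ih => rw [Finset.sum_cons, Finset.prod_cons, zpow_add, ih]

def matrixZPow (t : m → G) (A : Matrix m n ℤ) : n → G :=
  fun j => ∏ i, t i ^ A i j

theorem mul_matrixZPow (t t' : m → G) (A : Matrix m n ℤ) :
    matrixZPow (t * t') A = matrixZPow t A * matrixZPow t' A := by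
  funext j
  simp only [matrixZPow, Pi.mul_apply, mul_zpow, Finset.prod_mul_distrib]

theorem matrixZPow_mul [Fintype n] (t : m → G) (A : Matrix m n ℤ) (B : Matrix n p ℤ) :
    matrixZPow t (A * B) = matrixZPow (matrixZPow t A) B := by
  funext k
  simp only [matrixZPow, Matrix.mul_apply, zpow_sum, ← Finset.prod_zpow, ← zpow_mul]
  exact Finset.prod_comm

theorem matrixZPow_smul_one [DecidableEq m] (t : m → G) (d : ℤ) :
    matrixZPow t (d • (1 : Matrix m m ℤ)) = t ^ d := by
  funext j
  rw [matrixZPow, Fintype.prod_eq_single j fun i hij => by simp [Matrix.one_apply_ne hij]]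
  simp

theorem matrixZPow_surjective [Fintype n] [DecidableEq n] (B : Matrix n n ℤ)
    (hroot : Surjective fun w : G => w ^ B.det) :
    Surjective fun s : n → G => matrixZPow s B := by
  intro c
  choose w hw using fun j => hroot (c j)
  refine ⟨matrixZPow w B.adjugate, show matrixZPow _ B = c from ?_⟩
  rw [← matrixZPow_mul, Matrix.adjugate_mul, matrixZPow_smul_one]
  exact funext hw

theorem matrixZPow_extend_one [Fintype n] {σ : n → m} (hσ : Injective σ) (s : n → G)
    (A : Matrix m p ℤ) :
    matrixZPow (extend σ s 1) A = matrixZPow s (A.submatrix σ id) := by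
  funext j
  refine (Fintype.prod_of_injective σ hσ _ _ (fun i hi => ?_) fun k => ?_).symm
  · rw [extend_apply' _ _ _ hi, Pi.one_apply, one_zpow]
  · rw [hσ.extend_apply, Matrix.submatrix_apply, id]

theorem exists_matrixZPow_eq_one_of_injective [Fintype n] [DecidableEq n] (A : Matrix m n ℤ)
    {σ : n → m} (hσ : Injective σ)
    (hroot : Surjective fun w : G => w ^ (A.submatrix σ id).det) (y : m → G) :
    ∃ t : m → G, matrixZPow t A = 1 ∧ ∀ i ∉ Set.range σ, t i = y i := by
  obtain ⟨s, hs : matrixZPow s _ = _⟩ :=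
    matrixZPow_surjective _ hroot (matrixZPow (extend σ (1 : n → G) y) A)⁻¹
  refine ⟨extend σ s y, ?_, fun i hi => extend_apply' _ _ _ hi⟩
  have hsplit : extend σ s y = extend σ s 1 * extend σ (1 : n → G) y := by
    simpa only [mul_one, one_mul] using extend_mul σ s 1 (1 : m → G) y
  rw [hsplit, mul_matrixZPow, matrixZPow_extend_one hσ, hs, inv_mul_cancel]

end MatrixZPow

theorem IsAlgClosed.units_zpow_surjective (K : Type*) [Field K] [IsAlgClosed K] {d : ℤ}
    (hd : d ≠ 0) : Surjective fun w : Kˣ => w ^ d := by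
  have hroot (a : Kˣ) : ∃ w : Kˣ, w ^ d.natAbs = a := by
    obtain ⟨z, hz⟩ := IsAlgClosed.exists_pow_nat_eq (a : K) (Int.natAbs_pos.mpr hd)
    have hz0 : z ≠ 0 := ne_zero_pow (Int.natAbs_ne_zero.mpr hd) (hz ▸ a.ne_zero)
    exact ⟨Units.mk0 z hz0, Units.ext (by simpa using hz)⟩
  intro a
  rcases Int.natAbs_eq d with h | h
  · obtain ⟨w, hw⟩ := hroot a
    exact ⟨w, show w ^ d = a by rw [h, zpow_natCast, hw]⟩
  · obtain ⟨w, hw⟩ := hroot a⁻¹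
    exact ⟨w, show w ^ d = a by rw [h, zpow_neg, zpow_natCast, hw, inv_inv]⟩

theorem stmt_2_general {K : Type*} [Field K] [IsAlgClosed K] {N r : ℕ}
    (A : Matrix (Fin r) (Fin N) ℤ)
    (σ : Fin N → Fin r) (hσ : Function.Injective σ)
    (hdet : (Matrix.of fun i j : Fin N => A (σ i) j).det ≠ 0)
    (x : Fin r → Kˣ) :
    ∃ t : Fin r → Kˣ,
      (∀ j : Fin N, ∏ i : Fin r, t i ^ A i j = 1) ∧
      (∀ i : Fin r, i ∉ Set.range σ → t i = (x i)⁻¹) := by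
  obtain ⟨t, ht, htx⟩ := exists_matrixZPow_eq_one_of_injective A hσ
    (IsAlgClosed.units_zpow_surjective K hdet) fun i => (x i)⁻¹
  exact ⟨t, congr_fun ht, htx⟩

/-- Lemma 3.4 'RepOrbit', matrix form: with
`G = {t ∈ (Kˣ)^r : t^A = 1_N}` and `σ : Fin N → Fin r` injective such that the
square submatrix `A_σ` of rows `u_{σ(i)}` has determinant nonzero and coprime
to the characteristic, for every family `x` of units there exists `t ∈ G` with
`t i = (x i)⁻¹` for every `i` outside the image of `σ`. -/
theorem stmt_2 {K : Type*} [Field K] [IsAlgClosed K] {N r : ℕ} (hNr : N ≤ r)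
    (A : Matrix (Fin r) (Fin N) ℤ)
    (σ : Fin N → Fin r) (hσ : Function.Injective σ)
    (hdet : (Matrix.of fun i j : Fin N => A (σ i) j).det ≠ 0)
    (hchar : ∀ p : ℕ, 0 < p → CharP K p →
      ¬ ((p : ℤ) ∣ (Matrix.of fun i j : Fin N => A (σ i) j).det))
    (x : Fin r → Kˣ) :
    ∃ t : Fin r → Kˣ,
      (∀ j : Fin N, ∏ i : Fin r, t i ^ A i j = 1) ∧
      (∀ i : Fin r, i ∉ Set.range σ → t i = (x i)⁻¹) :=
  stmt_2_general A σ hσ hdet x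
end

section
/- Let K be an algebraically closed field and k ≤ N positive integers. Let H be an N×N lower triangular integer matrix whose diagonal entries are all nonzero and coprime to the characteristic of K, and let L2 be its k×k bottom-right block (rows and columns N−k+1,…,N). Then for every y ∈ (Kˣ)^k the following are equivalent: (i) y^{L2} = 1_k; (ii) there exists s ∈ (Kˣ)^{N−k} such that the concatenated tuple (s_1,…,s_{N−k},y_1,…,y_k) ∈ (Kˣ)^N satisfies (s,y)^H = 1_N. (Paper: the key equivalence between equations (eq:PowerH) and (eq:PowerL) established in the proof of Lemma 3.8.) -/
/-!
Since `H` is lower triangular, the last `k` coordinates of `(s, y)^H` do not involve `s` and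
are exactly `y^{L2}`, while the first `N - k` coordinates read `s^{L1} = c(y)` for the
top-left block `L1`, which is again lower triangular with nonzero diagonal. Such a system is
solved by back-substitution, each step extracting a root of order a diagonal entry, which is
possible in the units of an algebraically closed field.
-/

theorem exists_isFixedPt_of_dependsOn_gt {ι α : Type*} [Preorder ι] [WellFoundedGT ι]
    [Nonempty α] (F : (ι → α) → ι → α)
    (hF : ∀ j s s', (∀ i, j < i → s i = s' i) → F s j = F s' j) :
    ∃ s, Function.IsFixedPt F s := by
  classical
  inhabit α
  let s : ι → α := WellFoundedGT.fix fun j rec ↦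
    F (fun i ↦ if h : j < i then rec i h else default) j
  refine ⟨s, funext fun j ↦ ?_⟩
  conv_rhs => rw [show s j = _ from WellFoundedGT.fix_eq _ j]
  exact hF j _ _ fun i hij ↦ by rw [dif_pos hij]

theorem IsAlgClosed.exists_pow_eq_units {K : Type*} [Field K] [IsAlgClosed K] (a : Kˣ)
    {n : ℕ} (hn : n ≠ 0) : ∃ x : Kˣ, x ^ n = a := by
  obtain ⟨x, hx⟩ := IsAlgClosed.exists_pow_nat_eq (a : K) (Nat.pos_of_ne_zero hn)
  have hx0 : x ≠ 0 := fun h0 ↦ a.ne_zero (by rw [← hx, h0, zero_pow hn])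
  exact ⟨Units.mk0 x hx0, Units.ext (by simpa using hx)⟩

theorem IsAlgClosed.exists_zpow_eq_units {K : Type*} [Field K] [IsAlgClosed K] (a : Kˣ)
    {d : ℤ} (hd : d ≠ 0) : ∃ x : Kˣ, x ^ d = a := by
  have hn : d.natAbs ≠ 0 := Int.natAbs_ne_zero.2 hd
  rcases Int.natAbs_eq d with h | h
  · obtain ⟨x, hx⟩ := exists_pow_eq_units a hn
    exact ⟨x, by rw [h, zpow_natCast, hx]⟩
  · obtain ⟨x, hx⟩ := exists_pow_eq_units a⁻¹ hn
    exact ⟨x, by rw [h, zpow_neg, zpow_natCast, hx, inv_inv]⟩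

theorem exists_prod_zpow_eq_of_lowerTriangular {G ι : Type*} [CommGroup G] [Fintype ι]
    [LinearOrder ι] (A : Matrix ι ι ℤ) (hA : ∀ i j, i < j → A i j = 0)
    (hroot : ∀ j (a : G), ∃ x, x ^ A j j = a) (c : ι → G) :
    ∃ s : ι → G, ∀ j, ∏ i, s i ^ A i j = c j := by
  choose r hr using hroot
  obtain ⟨s, hs⟩ := exists_isFixedPt_of_dependsOn_gt
    (fun s j ↦ r j (c j * (∏ i ∈ Finset.univ.erase j, s i ^ A i j)⁻¹)) fun j s s' hss' ↦ by
      refine congrArg _ (congrArg _ (congrArg _ (Finset.prod_congr rfl fun i hi ↦ ?_)))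
      rcases (Finset.ne_of_mem_erase hi).lt_or_gt with hij | hji
      · simp [hA i j hij]
      · rw [hss' i hji]
  refine ⟨s, fun j ↦ ?_⟩
  rw [← Finset.mul_prod_erase _ _ (Finset.mem_univ j), ← congrFun hs j, hr,
    inv_mul_cancel_right]

theorem Fin.prod_univ_add_of_eq {M : Type*} [CommMonoid M] {m k N : ℕ} (hN : m + k = N)
    (f : Fin N → M) :
    ∏ i, f i = (∏ i : Fin m, f ⟨i, by omega⟩) * ∏ i : Fin k, f ⟨m + i, by omega⟩ := by
  subst hN
  exact Fin.prod_univ_add f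

theorem Fin.forall_add_of_eq {m k N : ℕ} (hN : m + k = N) (P : Fin N → Prop) :
    (∀ i, P i) ↔ (∀ i : Fin m, P ⟨i, by omega⟩) ∧ ∀ i : Fin k, P ⟨m + i, by omega⟩ := by
  subst hN
  exact Fin.forall_fin_add P

/-- equivalence (eq:PowerH) ⇔ (eq:PowerL) from the proof of
Lemma 3.8: for `H` an `N×N` lower triangular integer matrix with diagonal
entries nonzero and coprime to the characteristic of the algebraically closed
field `K`, and `L2` its `k×k` bottom-right block, `y^{L2} = 1_k` holds iff some
`s ∈ (Kˣ)^{N-k}` makes the concatenation `(s,y)` satisfy `(s,y)^H = 1_N`. -/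
theorem stmt_3 {K : Type*} [Field K] [IsAlgClosed K] {N k : ℕ}
    (hkN : k ≤ N)
    (H : Matrix (Fin N) (Fin N) ℤ)
    (hlow : ∀ i j : Fin N, (i : ℕ) < (j : ℕ) → H i j = 0)
    (hdiag : ∀ i : Fin N, H i i ≠ 0)
    (y : Fin k → Kˣ) :
    (∀ j : Fin k, ∏ i : Fin k,
        y i ^ H ⟨N - k + (i : ℕ), by have := i.isLt; omega⟩
               ⟨N - k + (j : ℕ), by have := j.isLt; omega⟩ = 1)
      ↔ ∃ s : Fin (N - k) → Kˣ,
          ∀ j : Fin N, ∏ i : Fin N,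
            (if h : (i : ℕ) < N - k then s ⟨(i : ℕ), h⟩
             else y ⟨(i : ℕ) - (N - k), by have := i.isLt; omega⟩) ^ H i j = 1 := by
  have hN : N - k + k = N := by omega
  simp only [Fin.forall_add_of_eq hN, Fin.prod_univ_add_of_eq hN, Fin.is_lt, ↓reduceDIte,
    Fin.eta, add_lt_iff_neg_left, not_lt_zero, add_tsub_cancel_left]
  have hupper (s : Fin (N - k) → Kˣ) (j : Fin k) :
      ∏ i, s i ^ H ⟨i, by omega⟩ ⟨N - k + j, by omega⟩ = 1 :=
    Finset.prod_eq_one fun i _ ↦ by rw [hlow _ _ (by dsimp only; omega), zpow_zero]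
  simp only [hupper, one_mul]
  obtain ⟨s, hs⟩ := exists_prod_zpow_eq_of_lowerTriangular
    (fun i j : Fin (N - k) ↦ H ⟨i, by omega⟩ ⟨j, by omega⟩) (fun i j hij ↦ hlow _ _ hij)
    (fun j a ↦ IsAlgClosed.exists_zpow_eq_units a (hdiag _))
    (fun j ↦ (∏ i, y i ^ H ⟨N - k + i, by omega⟩ ⟨j, by omega⟩)⁻¹)
  exact ⟨fun hy ↦ ⟨s, fun j ↦ by rw [hs, inv_mul_cancel], hy⟩, fun ⟨_, _, hy⟩ ↦ hy⟩
end
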